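/- For 0 < ν < 1 and p ∈ (0, π/2), the range of the function k ↦ ω(p+k) + ω(p−k) over real k is the interval [2ω(p), 2π − 2ω(p)], where ω(x) = arccos(ν cos x). -/

import Mathlib

/-!
Write `f k = ω(p+k) + ω(p-k)`. It is continuous, even and `2π`-periodic, so its range is
`f '' [0, π]`. Since `ω'(x) = g(ν sin x)` with `g t = t / √(1 - ν² + t²)` increasing and
`sin (p+k) - sin (p-k) = 2 cos p sin k ≥ 0` on `[0, π]`, `f` is monotone there, so its range is
`[f 0, f π] = [2ω(p), 2π - 2ω(p)]` by `arccos (-x) = π - arccos x`.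
-/

open Real Set Function

theorem Function.Periodic.range_eq_Icc_of_even_of_monotoneOn {f : ℝ → ℝ} {a : ℝ}
    (hcont : Continuous f) (hper : Periodic f (2 * a)) (heven : Function.Even f) (ha : 0 < a)
    (hmono : MonotoneOn f (Icc 0 a)) : range f = Icc (f 0) (f a) := by
  have hfold : f '' Icc (-a) a = f '' Icc 0 a := by
    refine subset_antisymm ?_ (image_mono (Icc_subset_Icc_left (by linarith)))
    rintro _ ⟨x, hx, rfl⟩
    refine ⟨|x|, ⟨abs_nonneg x, abs_le.2 hx⟩, ?_⟩
    rcases abs_choice x with h | h <;> simp only [h, heven x]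
  rw [← hper.image_Icc (by linarith) (-a), show -a + 2 * a = a by ring, hfold,
    hcont.continuousOn.image_Icc_of_monotoneOn ha.le hmono]

theorem monotone_div_sqrt_add_sq {c : ℝ} (hc : 0 < c) : Monotone fun t => t / √(c + t ^ 2) := by
  refine monotone_of_odd_of_monotoneOn_nonneg (fun t => by simp [neg_div]) ?_
  intro s hs t ht hst
  have hsq {u : ℝ} : √(c + u ^ 2) ^ 2 = c + u ^ 2 := sq_sqrt (by positivity)
  rw [div_le_div_iff₀ (by positivity) (by positivity), ← pow_le_pow_iff_left₀
    (mul_nonneg hs (sqrt_nonneg _)) (mul_nonneg ht (sqrt_nonneg _)) two_ne_zero, mul_pow, mul_pow,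
    hsq, hsq]
  nlinarith [mul_le_mul hst hst hs ht]

theorem Real.hasDerivAt_arccos_mul_cos {ν : ℝ} (hν : |ν| < 1) (x : ℝ) :
    HasDerivAt (fun x => arccos (ν * cos x)) (ν * sin x / √(1 - ν ^ 2 + (ν * sin x) ^ 2)) x := by
  have hlt : |ν * cos x| < 1 := by
    rw [abs_mul]
    nlinarith [abs_cos_le_one x, abs_nonneg ν, abs_nonneg (cos x)]
  obtain ⟨hlow, hup⟩ := abs_lt.1 hlt
  refine ((hasDerivAt_arccos hlow.ne' hup.ne).comp x
    ((hasDerivAt_cos x).const_mul ν)).congr_deriv ?_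
  have hsq : 1 - (ν * cos x) ^ 2 = 1 - ν ^ 2 + (ν * sin x) ^ 2 := by
    linear_combination -ν ^ 2 * sin_sq_add_cos_sq x
  simp only [hsq]
  ring

/-- The paper's `ω₊₊(p, k)`, with `ω(x) = arccos (ν cos x)`. -/
noncomputable def omegaPP (ν p k : ℝ) : ℝ := arccos (ν * cos (p + k)) + arccos (ν * cos (p - k))

section omegaPP

variable {ν p : ℝ}

theorem continuous_omegaPP : Continuous (omegaPP ν p) := by
  unfold omegaPP
  fun_prop

theorem omegaPP_periodic : Periodic (omegaPP ν p) (2 * π) := fun k => by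
  simp only [omegaPP, ← add_assoc, cos_add_two_pi, sub_add_eq_sub_sub, cos_sub_two_pi]

theorem omegaPP_even : Function.Even (omegaPP ν p) := fun k => by
  simp only [omegaPP, ← sub_eq_add_neg, sub_neg_eq_add, add_comm]

theorem omegaPP_zero : omegaPP ν p 0 = 2 * arccos (ν * cos p) := by
  simp only [omegaPP, add_zero, sub_zero]
  ring

theorem omegaPP_pi : omegaPP ν p π = 2 * π - 2 * arccos (ν * cos p) := by
  rw [omegaPP, cos_add_pi, ← cos_neg (p - π), neg_sub, cos_pi_sub, mul_neg, arccos_neg]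
  ring

theorem hasDerivAt_omegaPP (hν : |ν| < 1) (k : ℝ) :
    HasDerivAt (omegaPP ν p)
      (ν * sin (p + k) / √(1 - ν ^ 2 + (ν * sin (p + k)) ^ 2)
        - ν * sin (p - k) / √(1 - ν ^ 2 + (ν * sin (p - k)) ^ 2)) k := by
  have hplus := (hasDerivAt_arccos_mul_cos hν (p + k)).comp k ((hasDerivAt_id k).const_add p)
  have hminus := (hasDerivAt_arccos_mul_cos hν (p - k)).comp k ((hasDerivAt_id k).const_sub p)
  exact (hplus.add hminus).congr_deriv (by simp only [mul_one, mul_neg]; ring)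

theorem monotoneOn_omegaPP (hν0 : 0 ≤ ν) (hν1 : ν < 1) (hp : 0 ≤ cos p) :
    MonotoneOn (omegaPP ν p) (Icc 0 π) := by
  have hν : |ν| < 1 := abs_lt.2 ⟨by linarith, hν1⟩
  refine monotoneOn_of_deriv_nonneg (convex_Icc 0 π) continuous_omegaPP.continuousOn
    (fun k _ => (hasDerivAt_omegaPP hν k).differentiableAt.differentiableWithinAt) fun k hk => ?_
  rw [interior_Icc] at hk
  have hsin : sin (p - k) ≤ sin (p + k) := by
    have hdiff : sin (p + k) - sin (p - k) = 2 * cos p * sin k := by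
      rw [sin_add, sin_sub]
      ring
    nlinarith [sin_nonneg_of_nonneg_of_le_pi hk.1.le hk.2.le]
  rw [(hasDerivAt_omegaPP hν k).deriv, sub_nonneg]
  exact monotone_div_sqrt_add_sq (by nlinarith) (mul_le_mul_of_nonneg_left hsin hν0)

end omegaPP

theorem omega_pp_range (ν : ℝ) (hν0 : 0 < ν) (hν1 : ν < 1) (p : ℝ)
    (hp0 : 0 < p) (hp1 : p < Real.pi / 2) :
    Set.range (fun k : ℝ =>
        Real.arccos (ν * Real.cos (p + k)) + Real.arccos (ν * Real.cos (p - k)))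
      = Set.Icc (2 * Real.arccos (ν * Real.cos p))
          (2 * Real.pi - 2 * Real.arccos (ν * Real.cos p)) := by
  have hcos : 0 ≤ cos p := cos_nonneg_of_mem_Icc ⟨by linarith [pi_pos], hp1.le⟩
  change range (omegaPP ν p) = _
  rw [omegaPP_periodic.range_eq_Icc_of_even_of_monotoneOn continuous_omegaPP omegaPP_even pi_pos
    (monotoneOn_omegaPP hν0.le hν1 hcos), omegaPP_zero, omegaPP_pi]
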